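/- arXiv:2402.17618 — 5 statements merged into one kernel-verified Lean document; each statement's English description precedes it below -/
import Mathlib

section
/- Let f(x) = (1 - x^C(m+k+1,m))^2 - (1 - x^C(m+k+2,m))*(1 - x^C(m+k,m)), where C(a,b) denotes the binomial coefficient and m, k are fixed nonnegative integers. Then f(x) ≥ 0 for all real x with 0 ≤ x ≤ 1. -/
open Finset

/-- Number of pairs `(i,j)` with `i < u`, `j < v`, `i + j = s`. -/
lemma fiber_card (u v s : ℕ) :
    ((Finset.range u ×ˢ Finset.range v).filter (fun p => p.1 + p.2 = s)).card
      = min u (s+1) - (s+1-v) := by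
  rw [← Nat.card_Ico]
  apply Finset.card_bij' (fun p _ => p.1) (fun i _ => (i, s - i))
  · intro p hp
    simp only [mem_filter, mem_product, mem_range] at hp
    simp only [mem_Ico]
    omega
  · intro i hi
    simp only [mem_Ico] at hi
    simp only [mem_filter, mem_product, mem_range]
    omega
  · intro p hp
    simp only [mem_filter, mem_product, mem_range] at hp
    ext <;> simp <;> omega
  · intro i _
    rfl

/-- Expansion of the double geometric sum into coefficients. -/
lemma expand_sum (u v D : ℕ) (hD : u + v ≤ D) (x : ℝ) :
    ∑ p ∈ Finset.range u ×ˢ Finset.range v, x ^ (p.1 + p.2)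
      = ∑ s ∈ Finset.range D, ((min u (s+1) - (s+1-v) : ℕ) : ℝ) * x ^ s := by
  rw [← Finset.sum_fiberwise_of_maps_to (g := fun p : ℕ × ℕ => p.1 + p.2)
      (t := Finset.range D) ?_ (fun p => x ^ (p.1 + p.2))]
  · refine Finset.sum_congr rfl fun s _ => ?_
    rw [← fiber_card u v s]
    rw [Finset.sum_congr rfl (fun p hp => ?_)]
    · rw [Finset.sum_const, nsmul_eq_mul]
    · simp only [mem_filter] at hp
      rw [hp.2]
  · intro p hp
    simp only [mem_product, mem_range] at hp ⊢
    omega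

/-- Abel-type lemma: coefficients nonneg then nonpos with nonneg total sum. -/
lemma abel_lemma (D J : ℕ) (p q : ℕ → ℝ)
    (h1 : ∀ s, s < J → q s ≤ p s) (h2 : ∀ s, J ≤ s → p s ≤ q s)
    (hsum : ∑ s ∈ Finset.range D, q s ≤ ∑ s ∈ Finset.range D, p s)
    (x : ℝ) (hx0 : 0 ≤ x) (hx1 : x ≤ 1) :
    ∑ s ∈ Finset.range D, q s * x ^ s ≤ ∑ s ∈ Finset.range D, p s * x ^ s := by
  have key : ∀ s ∈ Finset.range D, (p s - q s) * x ^ J ≤ (p s - q s) * x ^ s := by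
    intro s _
    rcases lt_or_ge s J with h | h
    · exact mul_le_mul_of_nonneg_left (pow_le_pow_of_le_one hx0 hx1 h.le)
        (sub_nonneg.mpr (h1 s h))
    · exact mul_le_mul_of_nonpos_left (pow_le_pow_of_le_one hx0 hx1 h)
        (sub_nonpos.mpr (h2 s h))
  have h3 := Finset.sum_le_sum key
  rw [← Finset.sum_mul] at h3
  have h4 : 0 ≤ (∑ s ∈ Finset.range D, (p s - q s)) * x ^ J :=
    mul_nonneg (by rw [Finset.sum_sub_distrib]; linarith) (pow_nonneg hx0 J)
  have h5 : 0 ≤ ∑ s ∈ Finset.range D, (p s - q s) * x ^ s := le_trans h4 h3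
  have h6 : ∑ s ∈ Finset.range D, (p s - q s) * x ^ s
      = ∑ s ∈ Finset.range D, p s * x ^ s - ∑ s ∈ Finset.range D, q s * x ^ s := by
    rw [← Finset.sum_sub_distrib]
    exact Finset.sum_congr rfl fun s _ => by ring
  linarith [h6 ▸ h5]

/-- The key inequality on geometric sums. -/
lemma key_ineq (a b c : ℕ) (hab : a ≤ b) (hbc : b ≤ c)
    (hconv : 2*b ≤ a + c) (hlc : a*c ≤ b*b)
    (x : ℝ) (hx0 : 0 ≤ x) (hx1 : x ≤ 1) :
    (∑ i ∈ Finset.range c, x ^ i) * (∑ i ∈ Finset.range a, x ^ i)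
      ≤ (∑ i ∈ Finset.range b, x ^ i) ^ 2 := by
  have prodform : ∀ u v : ℕ,
      (∑ i ∈ Finset.range u, x ^ i) * (∑ i ∈ Finset.range v, x ^ i)
        = ∑ p ∈ Finset.range u ×ˢ Finset.range v, x ^ (p.1 + p.2) := by
    intro u v
    rw [Finset.sum_mul_sum, Finset.sum_product]
    exact Finset.sum_congr rfl fun i _ => Finset.sum_congr rfl fun j _ => (pow_add x i j).symm
  have sumN : ∀ u v : ℕ, u + v ≤ a + c →
      ∑ s ∈ Finset.range (a+c), ((min u (s+1) - (s+1-v) : ℕ) : ℝ) = (u : ℝ) * v := by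
    intro u v huv
    have h := expand_sum u v (a+c) huv 1
    simp only [one_pow, mul_one] at h
    rw [← h, Finset.sum_const, Finset.card_product, Finset.card_range, Finset.card_range,
      nsmul_eq_mul, Nat.cast_mul, mul_one]
  rw [sq, prodform, prodform, expand_sum c a (a+c) (by omega) x,
    expand_sum b b (a+c) (by omega) x]
  apply abel_lemma (a+c) (2*b - a)
  · intro s hs
    exact_mod_cast Nat.cast_le.mpr (by omega : min c (s+1) - (s+1-a) ≤ min b (s+1) - (s+1-b))
  · intro s hs
    exact_mod_cast Nat.cast_le.mpr (by omega : min b (s+1) - (s+1-b) ≤ min c (s+1) - (s+1-a))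
  · rw [sumN c a (by omega), sumN b b (by omega)]
    have : (a : ℝ) * c ≤ (b : ℝ) * b := by exact_mod_cast hlc
    linarith
  · exact hx0
  · exact hx1

/-- For fixed nonnegative integers `m, k`, the function
`f(x) = (1 - x^C(m+k+1,m))^2 - (1 - x^C(m+k+2,m)) * (1 - x^C(m+k,m))`
is nonnegative on `[0,1]`. -/
theorem stmt0 (m k : ℕ) (x : ℝ) (hx0 : 0 ≤ x) (hx1 : x ≤ 1) :
    0 ≤ (1 - x ^ Nat.choose (m + k + 1) m) ^ 2 -
      (1 - x ^ Nat.choose (m + k + 2) m) * (1 - x ^ Nat.choose (m + k) m) := by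
  set a := Nat.choose (m + k) m with ha_def
  set b := Nat.choose (m + k + 1) m with hb_def
  set c := Nat.choose (m + k + 2) m with hc_def
  have hab : a ≤ b := Nat.choose_le_choose m (by omega)
  have hbc : b ≤ c := Nat.choose_le_choose m (by omega)
  have hconv : 2*b ≤ a + c := by
    rcases m with _ | m
    · simp [ha_def, hb_def, hc_def]
    · have h1 : b = (m + 1 + k).choose m + a := by
        rw [hb_def, ha_def]; exact Nat.choose_succ_succ (m+1+k) m
      have h2 : c = (m + 1 + k + 1).choose m + b := by
        rw [hc_def, hb_def]; exact Nat.choose_succ_succ (m+1+k+1) m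
      have h3 : (m + 1 + k).choose m ≤ (m + 1 + k + 1).choose m :=
        Nat.choose_le_choose m (by omega)
      omega
  have hlc : a * c ≤ b * b := by
    have hm : m ≤ m + k := by omega
    have hA : a * (m + k + 1) = b * (m + k + 1 - m) := by
      rw [ha_def, hb_def]; exact Nat.choose_mul_succ_eq (m+k) m
    have hB : b * (m + k + 2) = c * (m + k + 2 - m) := by
      rw [hb_def, hc_def]; exact Nat.choose_mul_succ_eq (m+k+1) m
    have e1 : m + k + 1 - m = k + 1 := by omega
    have e2 : m + k + 2 - m = k + 2 := by omega
    rw [e1] at hA; rw [e2] at hB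
    have key : a * c * ((m + k + 1) * (k + 2)) = b * b * ((k + 1) * (m + k + 2)) := by
      calc a * c * ((m + k + 1) * (k + 2)) = (a * (m + k + 1)) * (c * (k + 2)) := by ring
        _ = (b * (k + 1)) * (b * (m + k + 2)) := by rw [hA, ← hB]
        _ = b * b * ((k + 1) * (m + k + 2)) := by ring
    have hle : (k + 1) * (m + k + 2) ≤ (m + k + 1) * (k + 2) := by nlinarith
    have hpos : 0 < (m + k + 1) * (k + 2) := by positivity
    have h5 : a * c * ((m + k + 1) * (k + 2)) ≤ b * b * ((m + k + 1) * (k + 2)) :=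
      key.trans_le (Nat.mul_le_mul_left _ hle)
    exact Nat.le_of_mul_le_mul_right h5 hpos
  rcases eq_or_lt_of_le hx1 with h1 | h1
  · subst h1; norm_num
  · have gs : ∀ t : ℕ, 1 - x ^ t = (1-x) * ∑ i ∈ Finset.range t, x ^ i := by
      intro t
      have := geom_sum_mul x t
      nlinarith [this]
    rw [gs a, gs b, gs c]
    have hkey := key_ineq a b c hab hbc hconv hlc x hx0 hx1
    nlinarith [mul_nonneg (sq_nonneg (1-x))
      (sub_nonneg.mpr hkey)]
end

section
/- For nonnegative integers m ≥ 1 and k, the quantity C1 = C(m+k+1,m)^2 - C(m+k+2,m)*C(m+k,m) is positive, where C denotes the binomial coefficient. -/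
/-- For integers `m ≥ 1` and `k ≥ 0`,
`C1 = C(m+k+1,m)^2 - C(m+k+2,m)*C(m+k,m)` is positive. -/
theorem stmt1 (m k : ℕ) (hm : 1 ≤ m) :
    Nat.choose (m + k + 2) m * Nat.choose (m + k) m < Nat.choose (m + k + 1) m ^ 2 := by
  set a := Nat.choose (m + k) m with ha
  set b := Nat.choose (m + k + 1) m with hb
  set c := Nat.choose (m + k + 2) m with hc
  have s0 : (m + k).choose k = a := by
    rw [ha]
    have := Nat.choose_symm (n := m + k) (k := k) (by omega)
    simpa [Nat.add_sub_cancel] using this.symm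
  have s1 : (m + k + 1).choose (k + 1) = b := by
    rw [hb]
    have := Nat.choose_symm (n := m + k + 1) (k := k + 1) (by omega)
    simpa [show m + k + 1 - (k + 1) = m by omega] using this.symm
  have s2 : (m + k + 2).choose (k + 2) = c := by
    rw [hc]
    have := Nat.choose_symm (n := m + k + 2) (k := k + 2) (by omega)
    simpa [show m + k + 2 - (k + 2) = m by omega] using this.symm
  have h1 : (m + k + 1) * a = b * (k + 1) := by
    have := Nat.add_one_mul_choose_eq (m + k) k
    rw [s0] at this
    simpa [Nat.succ_eq_add_one, s1] using this
  have h2 : (m + k + 2) * b = c * (k + 2) := by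
    have := Nat.add_one_mul_choose_eq (m + k + 1) (k + 1)
    rw [s1] at this
    simpa [Nat.succ_eq_add_one, s2] using this
  have hapos : 0 < a := Nat.choose_pos (by omega)
  have key : c * a * ((k + 1) ^ 2 * (k + 2)) < b ^ 2 * ((k + 1) ^ 2 * (k + 2)) := by
    have e1 : c * a * ((k + 1) ^ 2 * (k + 2))
        = (m + k + 1) * a ^ 2 * ((m + k + 2) * (k + 1)) := by
      calc c * a * ((k + 1) ^ 2 * (k + 2))
          = c * (k + 2) * (a * (k + 1)) * (k + 1) := by ring
        _ = (m + k + 2) * b * (a * (k + 1)) * (k + 1) := by rw [h2]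
        _ = (m + k + 2) * a * (b * (k + 1)) * (k + 1) := by ring
        _ = (m + k + 2) * a * ((m + k + 1) * a) * (k + 1) := by rw [← h1]
        _ = (m + k + 1) * a ^ 2 * ((m + k + 2) * (k + 1)) := by ring
    have e2 : b ^ 2 * ((k + 1) ^ 2 * (k + 2))
        = (m + k + 1) * a ^ 2 * ((m + k + 1) * (k + 2)) := by
      calc b ^ 2 * ((k + 1) ^ 2 * (k + 2))
          = (b * (k + 1)) * (b * (k + 1)) * (k + 2) := by ring
        _ = ((m + k + 1) * a) * ((m + k + 1) * a) * (k + 2) := by rw [← h1]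
        _ = (m + k + 1) * a ^ 2 * ((m + k + 1) * (k + 2)) := by ring
    rw [e1, e2]
    have hx : (m + k + 2) * (k + 1) < (m + k + 1) * (k + 2) := by nlinarith
    exact Nat.mul_lt_mul_of_pos_left hx (by positivity)
  exact Nat.lt_of_mul_lt_mul_right key
end

section
/- For integers n ≥ 1, D ≥ 1, 0 ≤ j < D, and real q with 0 ≤ q ≤ 1, define E(j) = C(j+n-1, n-1)·(1 - q^{C(D-j+n-1, n-1)}). Then the sequence E(0), E(1), ..., E(D-1) is log-concave, i.e., E(j)^2 ≥ E(j-1)·E(j+1) for all 1 ≤ j ≤ D-2; in particular it is unimodal. -/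
/-!
`E(j)` is the product of `C(j+n-1, n-1)` and `1 - q^{e(j)}` with `e(j) = C(D-j+n-1, n-1)`, and a
product of nonnegative log-concave sequences is log-concave. Binomial coefficients are log-concave
in the upper index, so the first factor and the exponents `e(j)` are log-concave. It remains to see
that `x ↦ 1 - q^x` is nondecreasing and log-concave as a function of `log x`: writing
`q = exp (-L)`, this says that `t ↦ log (1 - exp (-exp t))` is concave, and its derivative
`s / (exp s - 1)` at `s = exp t` is the reciprocal of a secant slope of the convex function `exp`,
hence antitone.
-/

open Real Set

namespace Nat

theorem choose_mul_choose_add_two_le_sq (m k : ℕ) :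
    m.choose k * (m + 2).choose k ≤ (m + 1).choose k ^ 2 := by
  rcases lt_or_ge m k with hmk | hkm
  · simp [choose_eq_zero_of_lt hmk]
  have hpos : 0 < (m + 1) * (m + 2 - k) := Nat.mul_pos m.succ_pos (by omega)
  have hfactor : (m + 1 - k) * (m + 2) ≤ (m + 1) * (m + 2 - k) := by
    zify [show k ≤ m + 1 by omega, show k ≤ m + 2 by omega]
    nlinarith
  refine Nat.le_of_mul_le_mul_right ?_ hpos
  calc m.choose k * (m + 2).choose k * ((m + 1) * (m + 2 - k))
      = (m.choose k * (m + 1)) * ((m + 2).choose k * (m + 2 - k)) := by ring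
    _ = (m + 1).choose k ^ 2 * ((m + 1 - k) * (m + 2)) := by
        rw [choose_mul_succ_eq m k, ← choose_mul_succ_eq (m + 1) k]; ring
    _ ≤ (m + 1).choose k ^ 2 * ((m + 1) * (m + 2 - k)) := Nat.mul_le_mul_left _ hfactor

theorem choose_sub_one_mul_choose_add_one_le_sq (m k : ℕ) :
    (m - 1).choose k * (m + 1).choose k ≤ m.choose k ^ 2 := by
  cases m with
  | zero => cases k <;> simp
  | succ m => simpa using choose_mul_choose_add_two_le_sq m k

end Nat

namespace Real

theorem antitoneOn_div_exp_sub_one : AntitoneOn (fun s => s / (exp s - 1)) (Ioi 0) := by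
  intro s (hs : 0 < s) t (ht : 0 < t) hst
  have hslope : (exp s - 1) / s ≤ (exp t - 1) / t := by
    simpa using convexOn_exp.secant_mono (mem_univ 0) (mem_univ s) (mem_univ t)
      (ne_of_gt hs) (ne_of_gt ht) hst
  have hslope_pos : 0 < (exp s - 1) / s := div_pos (by linarith [add_one_lt_exp (ne_of_gt hs)]) hs
  simpa only [inv_div] using inv_anti₀ hslope_pos hslope

theorem hasDerivAt_log_one_sub_exp_neg_exp (t : ℝ) :
    HasDerivAt (fun t => log (1 - exp (-exp t))) (exp t / (exp (exp t) - 1)) t := by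
  have hlt : exp (-exp t) < 1 := exp_lt_one_iff.2 (neg_neg_of_pos (exp_pos t))
  have hgt : 1 < exp (exp t) := one_lt_exp_iff.2 (exp_pos t)
  convert ((hasDerivAt_exp t).fun_neg.exp.const_sub 1).log (by linarith) using 1
  rw [exp_neg]
  field_simp

theorem concaveOn_log_one_sub_exp_neg_exp :
    ConcaveOn ℝ univ (fun t => log (1 - exp (-exp t))) := by
  refine Antitone.concaveOn_univ_of_deriv
    (fun t => (hasDerivAt_log_one_sub_exp_neg_exp t).differentiableAt) fun x y hxy => ?_
  simp only [(hasDerivAt_log_one_sub_exp_neg_exp _).deriv]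
  exact antitoneOn_div_exp_sub_one (exp_pos x) (exp_pos y) (exp_le_exp.2 hxy)

theorem monotone_log_one_sub_exp_neg_exp : Monotone (fun t => log (1 - exp (-exp t))) :=
  monotone_of_deriv_nonneg (fun t => (hasDerivAt_log_one_sub_exp_neg_exp t).differentiableAt)
    fun t => by
      rw [(hasDerivAt_log_one_sub_exp_neg_exp t).deriv]
      exact div_nonneg (exp_pos t).le (by linarith [one_lt_exp_iff.2 (exp_pos t)])

theorem one_sub_exp_neg_mul_mul_le_sq {L x y z : ℝ} (hL : 0 < L) (hx : 0 < x) (hy : 0 < y)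
    (hz : 0 < z) (hxz : x * z ≤ y ^ 2) :
    (1 - exp (-(L * x))) * (1 - exp (-(L * z))) ≤ (1 - exp (-(L * y))) ^ 2 := by
  set f : ℝ → ℝ := fun t => log (1 - exp (-exp t))
  have hrepr : ∀ w, 0 < w → 1 - exp (-(L * w)) = exp (f (log L + log w)) := fun w hw => by
    have : exp (-(L * w)) < 1 := exp_lt_one_iff.2 (by nlinarith)
    simp only [f, exp_add, exp_log hL, exp_log hw, exp_log (sub_pos.2 this)]
  have hlog : log x + log z ≤ 2 * log y := by
    rw [← log_mul (ne_of_gt hx) (ne_of_gt hz), ← Nat.cast_ofNat, ← log_pow]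
    exact log_le_log (mul_pos hx hz) hxz
  have hmid : f (log L + log x) + f (log L + log z) ≤ 2 * f (log L + log y) := by
    have hconc := concaveOn_log_one_sub_exp_neg_exp.2 (mem_univ (log L + log x))
      (mem_univ (log L + log z)) (by norm_num : (0 : ℝ) ≤ 1 / 2) (by norm_num : (0 : ℝ) ≤ 1 / 2)
      (by norm_num)
    have hmono := monotone_log_one_sub_exp_neg_exp
      (show 1 / 2 * (log L + log x) + 1 / 2 * (log L + log z) ≤ log L + log y by linarith)
    simp only [smul_eq_mul] at hconc
    linarith
  rw [hrepr x hx, hrepr y hy, hrepr z hz, ← exp_add, sq, ← exp_add]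
  exact exp_le_exp.2 (by linarith)

end Real

theorem one_sub_pow_mul_one_sub_pow_le_sq {q : ℝ} (hq0 : 0 ≤ q) (hq1 : q ≤ 1) {a b c : ℕ}
    (habc : a * c ≤ b ^ 2) : (1 - q ^ a) * (1 - q ^ c) ≤ (1 - q ^ b) ^ 2 := by
  rcases Nat.eq_zero_or_pos a with rfl | ha
  · simp [sq_nonneg]
  rcases Nat.eq_zero_or_pos c with rfl | hc
  · simp [sq_nonneg]
  have hb : 0 < b := Nat.pos_of_ne_zero fun hb => by
    subst hb
    exact absurd habc (by simp [ha.ne', hc.ne'])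
  rcases hq1.eq_or_lt with rfl | hq1
  · simp
  rcases hq0.eq_or_lt with rfl | hq0
  · simp [ha.ne', hb.ne', hc.ne']
  have hpow : ∀ m : ℕ, q ^ m = exp (-(-log q * m)) := fun m => by
    rw [← exp_log (pow_pos hq0 m), log_pow]
    ring_nf
  simp only [hpow]
  exact one_sub_exp_neg_mul_mul_le_sq (neg_pos.2 (log_neg hq0 hq1)) (by exact_mod_cast ha)
    (by exact_mod_cast hb) (by exact_mod_cast hc) (by exact_mod_cast habc)

theorem stmt8_general (n D : ℕ) (q : ℝ) (hq0 : 0 ≤ q) (hq1 : q ≤ 1)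
    (E : ℕ → ℝ)
    (hE : ∀ j, E j = (Nat.choose (j + n - 1) (n - 1) : ℝ) *
      (1 - q ^ Nat.choose (D - j + n - 1) (n - 1))) :
    ∀ j : ℕ, 1 ≤ j → j ≤ D - 2 → E (j - 1) * E (j + 1) ≤ E j ^ 2 := by
  intro j hj1 hj2
  obtain ⟨m, hm⟩ : ∃ m, m = j + n - 1 := ⟨_, rfl⟩
  obtain ⟨r, hr⟩ : ∃ r, r = D - j + n - 1 := ⟨_, rfl⟩
  rw [hE, hE, hE, show j - 1 + n - 1 = m - 1 by omega, show j + 1 + n - 1 = m + 1 by omega,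
    show D - (j - 1) + n - 1 = r + 1 by omega, show D - (j + 1) + n - 1 = r - 1 by omega, ← hm,
    ← hr]
  have hA : ((m - 1).choose (n - 1) * (m + 1).choose (n - 1) : ℝ) ≤ (m.choose (n - 1) : ℝ) ^ 2 := by
    exact_mod_cast Nat.choose_sub_one_mul_choose_add_one_le_sq m (n - 1)
  have hB := one_sub_pow_mul_one_sub_pow_le_sq hq0 hq1
    (Nat.choose_sub_one_mul_choose_add_one_le_sq r (n - 1))
  have hnonneg : ∀ e : ℕ, 0 ≤ 1 - q ^ e := fun e => sub_nonneg.2 (pow_le_one₀ hq0 hq1)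
  calc _ = ((m - 1).choose (n - 1) * (m + 1).choose (n - 1) : ℝ) *
        ((1 - q ^ (r - 1).choose (n - 1)) * (1 - q ^ (r + 1).choose (n - 1))) := by ring
    _ ≤ (m.choose (n - 1) : ℝ) ^ 2 * (1 - q ^ r.choose (n - 1)) ^ 2 :=
        mul_le_mul hA hB (mul_nonneg (hnonneg _) (hnonneg _)) (sq_nonneg _)
    _ = _ := by ring

/-- For `n ≥ 1`, `D ≥ 1` and real `0 ≤ q ≤ 1`, the sequence
`E(j) = C(j+n-1,n-1) * (1 - q^{C(D-j+n-1,n-1)})`, `0 ≤ j < D`,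
is log-concave: `E(j)^2 ≥ E(j-1) * E(j+1)` for `1 ≤ j ≤ D-2`. -/
theorem stmt8 (n D : ℕ) (hn : 1 ≤ n) (hD : 1 ≤ D) (q : ℝ) (hq0 : 0 ≤ q) (hq1 : q ≤ 1)
    (E : ℕ → ℝ)
    (hE : ∀ j, E j = (Nat.choose (j + n - 1) (n - 1) : ℝ) *
      (1 - q ^ Nat.choose (D - j + n - 1) (n - 1))) :
    ∀ j : ℕ, 1 ≤ j → j ≤ D - 2 → E (j - 1) * E (j + 1) ≤ E j ^ 2 :=
  stmt8_general n D q hq0 hq1 E hE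
end

section
/- Let A be a random level algebra on n variables with socle degree D obtained by choosing each monomial of degree D independently with probability p as a socle generator, and set q = 1-p. Then the expected value of the Hilbert function of A in degree j, for 0 ≤ j < D, equals C(j+n-1, n-1)·(1 - q^{C(D-j+n-1, n-1)}). -/
/-!
In degree `j` the quotient `S/Ann(B)` has as basis the monomials `x^α` of degree `j` dividing some
element of `B`, since `Ann(B)` is spanned by the monomials dividing no element of `B`. So the
Hilbert function counts the `α` hit by `B`. A fixed `α` is missed exactly when none of its
`C(D-j+n-1, n-1)` multiples of degree `D` is chosen, which has probability `q^C(D-j+n-1, n-1)`;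
linearity of expectation over the `C(j+n-1, n-1)` monomials `α` gives the formula.
-/

open MvPolynomial

/-- The finite set of exponent vectors of the monomials of degree exactly `D`
in `n` variables. -/
noncomputable def Mon (n D : ℕ) : Finset (Fin n →₀ ℕ) :=
  (Finset.Nat.antidiagonalTuple n D).map Finsupp.equivFunOnFinite.symm.toEmbedding

/-- The Macaulay annihilator of the monomial `x^b`:
the ideal `⟨x_1^{b_1+1},…,x_n^{b_n+1}⟩`. -/
noncomputable def annMon (K : Type*) [Field K] {n : ℕ} (b : Fin n →₀ ℕ) :
    Ideal (MvPolynomial (Fin n) K) :=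
  Ideal.span (Set.range fun i => (X i : MvPolynomial (Fin n) K) ^ (b i + 1))

/-- The Macaulay annihilator of a finite set of monomials, `Ann(B) = ⋂_{b ∈ B} Ann(x^b)`. -/
noncomputable def annSet (K : Type*) [Field K] {n : ℕ} (B : Finset (Fin n →₀ ℕ)) :
    Ideal (MvPolynomial (Fin n) K) :=
  B.inf (annMon K)

/-- The Hilbert function of a graded quotient `S/I`. -/
noncomputable def hilb (K : Type*) [Field K] {n : ℕ} (I : Ideal (MvPolynomial (Fin n) K))
    (j : ℕ) : ℕ :=
  Module.finrank K
    (Submodule.map (Ideal.Quotient.mkₐ K I).toLinearMap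
      (MvPolynomial.homogeneousSubmodule (Fin n) K j))

open Finset

lemma mem_Mon {n D : ℕ} {d : Fin n →₀ ℕ} : d ∈ Mon n D ↔ d.degree = D := by
  simp only [Mon, mem_map, Equiv.toEmbedding_apply, Nat.mem_antidiagonalTuple,
    Finsupp.degree_eq_sum]
  constructor
  · rintro ⟨f, hf, rfl⟩
    simpa using hf
  · intro h
    exact ⟨Finsupp.equivFunOnFinite d, by simpa using h, by simp⟩

lemma card_Mon {n : ℕ} (hn : 1 ≤ n) (m : ℕ) : #(Mon n m) = (m + n - 1).choose (n - 1) := by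
  have e : {P : Fin n → ℕ // P ∈ Nat.antidiagonalTuple n m} ≃ Sym (Fin n) m :=
    (Equiv.subtypeEquivRight fun P => Nat.mem_antidiagonalTuple).trans
      (Sym.equivNatSumOfFintype (Fin n) m).symm
  rw [Mon, card_map, ← Fintype.card_coe, Fintype.card_congr e, Sym.card_sym_eq_choose,
    Fintype.card_fin, Nat.add_comm m n]
  exact Nat.choose_symm_of_eq_add (by omega)

lemma filter_le_Mon_eq_map {n j D : ℕ} (hj : j ≤ D) {α : Fin n →₀ ℕ} (hα : α ∈ Mon n j) :
    {b ∈ Mon n D | α ≤ b} = (Mon n (D - j)).map (addLeftEmbedding α) := by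
  rw [mem_Mon] at hα
  ext b
  simp only [mem_filter, mem_map, mem_Mon, addLeftEmbedding_apply, le_iff_exists_add]
  constructor
  · rintro ⟨hb, γ, rfl⟩
    exact ⟨γ, by rw [map_add] at hb; omega, rfl⟩
  · rintro ⟨γ, hγ, rfl⟩
    exact ⟨by rw [map_add]; omega, γ, rfl⟩

lemma card_filter_le_Mon {n j D : ℕ} (hj : j ≤ D) {α : Fin n →₀ ℕ} (hα : α ∈ Mon n j) :
    #{b ∈ Mon n D | α ≤ b} = #(Mon n (D - j)) := by
  rw [filter_le_Mon_eq_map hj hα, card_map]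

section Annihilator

variable {K : Type*} [Field K] {n : ℕ}

lemma mem_annMon {b : Fin n →₀ ℕ} {f : MvPolynomial (Fin n) K} :
    f ∈ annMon K b ↔ ∀ d ∈ f.support, ¬ d ≤ b := by
  have hgen : Set.range (fun i => (X i : MvPolynomial (Fin n) K) ^ (b i + 1))
      = (monomial · 1) '' Set.range fun i => Finsupp.single i (b i + 1) := by
    rw [← Set.range_comp]
    simp [Function.comp_def, X_pow_eq_monomial]
  rw [annMon, hgen, mem_ideal_span_monomial_image]
  simp only [Set.exists_range_iff, Finsupp.single_le_iff, Nat.add_one_le_iff]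
  simp only [Finsupp.le_def, not_forall, not_le]

lemma mem_annSet {B : Finset (Fin n →₀ ℕ)} {f : MvPolynomial (Fin n) K} :
    f ∈ annSet K B ↔ ∀ d ∈ f.support, ∀ b ∈ B, ¬ d ≤ b := by
  simp only [annSet, Submodule.mem_finsetInf, mem_annMon]
  exact forall₂_comm

lemma restrictScalars_annSet (B : Finset (Fin n →₀ ℕ)) :
    (annSet K B).restrictScalars K = restrictSupport K {d | ∀ b ∈ B, ¬ d ≤ b} := by
  ext f
  simp only [Submodule.restrictScalars_mem, mem_annSet, mem_restrictSupport_iff]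
  exact ⟨fun h d hd => h d hd, fun h d hd => h hd⟩

end Annihilator

lemma Submodule.finrank_map_add_finrank_inf_ker {K V W : Type*} [DivisionRing K]
    [AddCommGroup V] [Module K V] [AddCommGroup W] [Module K W] (f : V →ₗ[K] W)
    (U : Submodule K V) [FiniteDimensional K U] :
    Module.finrank K (U.map f) + Module.finrank K ↥(U ⊓ LinearMap.ker f) = Module.finrank K U := by
  have hker : (LinearMap.ker f).comap U.subtype = (U ⊓ LinearMap.ker f).comap U.subtype := by
    rw [Submodule.comap_inf, Submodule.comap_subtype_self, top_inf_eq]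
  rw [← (f.domRestrict U).finrank_range_add_finrank_ker, LinearMap.range_domRestrict,
    LinearMap.ker_domRestrict, hker,
    LinearEquiv.finrank_eq (Submodule.comapSubtypeEquivOfLe inf_le_left)]

namespace MvPolynomial

variable {K σ : Type*} [Field K]

lemma restrictSupport_inf (s t : Set (σ →₀ ℕ)) :
    restrictSupport K s ⊓ restrictSupport K t = restrictSupport K (s ∩ t) := by
  ext f
  simp only [Submodule.mem_inf, mem_restrictSupport_iff, Set.subset_inter_iff]

instance (s : Finset (σ →₀ ℕ)) : FiniteDimensional K (restrictSupport K (s : Set (σ →₀ ℕ))) :=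
  Module.Finite.of_basis (basisRestrictSupport K _)

lemma finrank_restrictSupport (s : Finset (σ →₀ ℕ)) :
    Module.finrank K (restrictSupport K (s : Set (σ →₀ ℕ))) = #s := by
  rw [Module.finrank_eq_card_basis (basisRestrictSupport K _)]
  simp

lemma finrank_map_restrictSupport {W : Type*} [AddCommGroup W] [Module K W]
    (f : MvPolynomial σ K →ₗ[K] W) {t : Set (σ →₀ ℕ)} [DecidablePred (· ∈ t)]
    (hf : LinearMap.ker f = restrictSupport K t) (s : Finset (σ →₀ ℕ)) :
    Module.finrank K ((restrictSupport K (s : Set (σ →₀ ℕ))).map f) = #{d ∈ s | d ∉ t} := by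
  have h := Submodule.finrank_map_add_finrank_inf_ker f (restrictSupport K (s : Set (σ →₀ ℕ)))
  have hst : (s : Set (σ →₀ ℕ)) ∩ t = ↑{d ∈ s | d ∈ t} := by ext; simp
  rw [hf, restrictSupport_inf, hst, finrank_restrictSupport,
    finrank_restrictSupport, ← card_filter_add_card_filter_not (s := s) (· ∈ t)] at h
  omega

end MvPolynomial

lemma hilb_annSet {K : Type*} [Field K] {n : ℕ} (B : Finset (Fin n →₀ ℕ)) (j : ℕ) :
    hilb K (annSet K B) j = #{d ∈ Mon n j | ∃ b ∈ B, d ≤ b} := by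
  classical
  have hker : LinearMap.ker (Ideal.Quotient.mkₐ K (annSet K B)).toLinearMap
      = restrictSupport K {d | ∀ b ∈ B, ¬ d ≤ b} := by
    rw [← restrictScalars_annSet]
    ext f
    simp [Ideal.Quotient.eq_zero_iff_mem]
  have hdeg : homogeneousSubmodule (Fin n) K j
      = restrictSupport K (Mon n j : Set (Fin n →₀ ℕ)) := by
    rw [homogeneousSubmodule_eq_finsupp_supported]
    congr
    ext d
    simp [mem_Mon]
  rw [hilb, hdeg, finrank_map_restrictSupport _ hker]
  simp

section RandomSubset

variable {ι κ R : Type*} [CommRing R] {p q : R}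

lemma sum_powerset_filter_forall_not (hpq : p + q = 1) (M : Finset ι) (P : ι → Prop)
    [DecidablePred P] :
    ∑ B ∈ M.powerset with ∀ b ∈ B, ¬ P b, p ^ #B * q ^ (#M - #B) = q ^ #{b ∈ M | P b} := by
  have hsets : {B ∈ M.powerset | ∀ b ∈ B, ¬ P b} = {b ∈ M | ¬ P b}.powerset := by
    ext B
    simp only [mem_filter, mem_powerset, subset_iff]
    grind
  have hsplit : #{b ∈ M | P b} + #{b ∈ M | ¬ P b} = #M := card_filter_add_card_filter_not P
  rw [hsets]
  calc ∑ B ∈ {b ∈ M | ¬ P b}.powerset, p ^ #B * q ^ (#M - #B)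
      = ∑ B ∈ {b ∈ M | ¬ P b}.powerset,
          q ^ #{b ∈ M | P b} * (p ^ #B * q ^ (#{b ∈ M | ¬ P b} - #B)) := by
        refine sum_congr rfl fun B hB => ?_
        have hB := card_le_card (mem_powerset.mp hB)
        rw [show #M - #B = #{b ∈ M | P b} + (#{b ∈ M | ¬ P b} - #B) by omega, pow_add]
        ring
    _ = q ^ #{b ∈ M | P b} := by
        rw [← mul_sum, sum_pow_mul_eq_add_pow, hpq, one_pow, mul_one]

lemma sum_powerset_mul_ite_exists (hpq : p + q = 1) (M : Finset ι) (P : ι → Prop)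
    [DecidablePred P] :
    ∑ B ∈ M.powerset, p ^ #B * q ^ (#M - #B) * (if ∃ b ∈ B, P b then 1 else 0)
      = 1 - q ^ #{b ∈ M | P b} := by
  simp only [mul_ite, mul_one, mul_zero]
  rw [← sum_filter, ← sum_powerset_filter_forall_not hpq, eq_sub_iff_add_eq, ← one_pow #M, ← hpq,
    ← sum_pow_mul_eq_add_pow p q M]
  convert sum_filter_add_sum_filter_not M.powerset (fun B => ∃ b ∈ B, P b) _ using 3
  simp

lemma sum_powerset_mul_card_filter_exists (hpq : p + q = 1) (M : Finset ι) (A : Finset κ)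
    (Q : κ → ι → Prop) [∀ a b, Decidable (Q a b)] :
    ∑ B ∈ M.powerset, p ^ #B * q ^ (#M - #B) * (#{a ∈ A | ∃ b ∈ B, Q a b} : R)
      = ∑ a ∈ A, (1 - q ^ #{b ∈ M | Q a b}) := by
  simp only [natCast_card_filter, mul_sum]
  rw [sum_comm]
  exact sum_congr rfl fun a _ => sum_powerset_mul_ite_exists hpq M (Q a)

end RandomSubset

theorem stmt9_general (K : Type*) [Field K] (n D : ℕ) (hn : 1 ≤ n)
    (p q : ℝ) (hq : q = 1 - p) (j : ℕ) (hj : j < D) :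
    ∑ B ∈ (Mon n D).powerset,
        p ^ B.card * q ^ ((Mon n D).card - B.card) * (hilb K (annSet K B) j : ℝ)
      = (Nat.choose (j + n - 1) (n - 1) : ℝ) *
        (1 - q ^ Nat.choose (D - j + n - 1) (n - 1)) := by
  have hpq : p + q = 1 := by rw [hq]; ring
  have hmultiples : ∀ α ∈ Mon n j, #{b ∈ Mon n D | α ≤ b} = (D - j + n - 1).choose (n - 1) :=
    fun α hα => by rw [card_filter_le_Mon hj.le hα, card_Mon hn]
  simp only [hilb_annSet]
  rw [sum_powerset_mul_card_filter_exists hpq, sum_congr rfl fun α hα => by rw [hmultiples α hα],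
    sum_const, card_Mon hn, nsmul_eq_mul]

/-- For the random level algebra `A = S/Ann(𝓑)` obtained by placing each monomial of degree
`D` in `n` variables into the socle set `𝓑` independently with probability `p` (and
`q = 1 - p`), the expected value of the Hilbert function of `A` in degree `j < D` is
`C(j+n-1, n-1) * (1 - q^{C(D-j+n-1, n-1)})`. -/
theorem stmt9 (K : Type*) [Field K] (n D : ℕ) (hn : 1 ≤ n) (hD : 1 ≤ D)
    (p q : ℝ) (hp0 : 0 ≤ p) (hp1 : p ≤ 1) (hq : q = 1 - p) (j : ℕ) (hj : j < D) :
    ∑ B ∈ (Mon n D).powerset,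
        p ^ B.card * q ^ ((Mon n D).card - B.card) * (hilb K (annSet K B) j : ℝ)
      = (Nat.choose (j + n - 1) (n - 1) : ℝ) *
        (1 - q ^ Nat.choose (D - j + n - 1) (n - 1)) :=
  stmt9_general K n D hn p q hq j hj
end

section
/- For a real number q with 0 ≤ q ≤ 1 and integers m ≥ 1, k ≥ 0, the function g(x) = 1 + x^{C(m+k+1,m-1)+C(m+k,m-1)} + x^{C(m+k+1,m)+C(m+k,m-1)} - 2x^{C(m+k,m-1)} - x^{C(m+k+2,m)} satisfies g(1) = 0 and g(x) ≥ 0 for all x ∈ [0,1]. -/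
/-- Geometric-sum lower bound: `(n+1) x^n (1-x) ≤ 1 - x^(n+1)` on `[0,1]`. -/
lemma stmt19_geo (x : ℝ) (hx0 : 0 ≤ x) (hx1 : x ≤ 1) :
    ∀ n : ℕ, ((n : ℝ) + 1) * x ^ n * (1 - x) ≤ 1 - x ^ (n + 1) := by
  intro n
  induction n with
  | zero => simp
  | succ n ih =>
    have e1 : x ^ (n + 1) = x ^ n * x := pow_succ x n
    have e2 : x ^ (n + 2) = x ^ n * x * x := by rw [pow_succ, pow_succ]
    have h1 : x * (((n : ℝ) + 1) * x ^ n * (1 - x)) ≤ x * (1 - x ^ (n + 1)) :=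
      mul_le_mul_of_nonneg_left ih hx0
    have hle : x ^ (n + 1) ≤ 1 := pow_le_one₀ hx0 hx1
    have h2 : (0:ℝ) ≤ (1 - x) * (1 - x ^ (n + 1)) :=
      mul_nonneg (by linarith) (by linarith)
    rw [e1] at h1 hle h2 ⊢
    push_cast
    nlinarith [pow_nonneg hx0 n]

/-- Bernoulli-type upper bound: `1 - x^n ≤ n (1-x)` on `[0,1]`. -/
lemma stmt19_bern (x : ℝ) (hx0 : 0 ≤ x) (hx1 : x ≤ 1) (n : ℕ) :
    1 - x ^ n ≤ (n : ℝ) * (1 - x) := by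
  have h := one_add_mul_le_pow (show (-2:ℝ) ≤ x - 1 by linarith) n
  have e : (1 + (x - 1)) ^ n = x ^ n := by ring_nf
  rw [e] at h
  nlinarith

/-- The key real inequality, from log-concavity of the exponents. -/
lemma stmt19_aux (a p q : ℕ) (ha : 1 ≤ a) (hpq : p * q ≤ a * a) (x : ℝ)
    (hx0 : 0 ≤ x) (hx1 : x ≤ 1) :
    (x ^ a - x ^ (a + p)) * (x ^ a - x ^ (a + q)) ≤ (1 - x ^ a) ^ 2 := by
  obtain ⟨a', rfl⟩ : ∃ a', a = a' + 1 := ⟨a - 1, (Nat.succ_pred_eq_of_pos ha).symm⟩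
  have ht0 : (0:ℝ) ≤ x ^ a' := pow_nonneg hx0 a'
  have hxa : x ^ (a' + 1) = x ^ a' * x := pow_succ x a'
  have hxp : (0:ℝ) ≤ 1 - x ^ p := by
    have : x ^ p ≤ 1 := pow_le_one₀ hx0 hx1
    linarith
  have hxq : (0:ℝ) ≤ 1 - x ^ q := by
    have : x ^ q ≤ 1 := pow_le_one₀ hx0 hx1
    linarith
  have hxa0 : (0:ℝ) ≤ x ^ (a' + 1) := pow_nonneg hx0 (a' + 1)
  have h1x : (0:ℝ) ≤ 1 - x := by linarith
  have c1 : x ^ (a' + 1) * (1 - x ^ p) ≤ x ^ (a' + 1) * ((p : ℝ) * (1 - x)) :=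
    mul_le_mul_of_nonneg_left (stmt19_bern x hx0 hx1 p) hxa0
  have c2 : x ^ (a' + 1) * (1 - x ^ q) ≤ x ^ (a' + 1) * ((q : ℝ) * (1 - x)) :=
    mul_le_mul_of_nonneg_left (stmt19_bern x hx0 hx1 q) hxa0
  have hgeom : ((a' : ℝ) + 1) * x ^ a' * (1 - x) ≤ 1 - x ^ (a' + 1) := stmt19_geo x hx0 hx1 a'
  have hpq' : ((p : ℝ) * q) ≤ ((a' : ℝ) + 1) * ((a' : ℝ) + 1) := by exact_mod_cast hpq
  calc (x ^ (a' + 1) - x ^ (a' + 1 + p)) * (x ^ (a' + 1) - x ^ (a' + 1 + q))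
      = (x ^ (a' + 1) * (1 - x ^ p)) * (x ^ (a' + 1) * (1 - x ^ q)) := by
        rw [pow_add, pow_add]; ring
    _ ≤ (x ^ (a' + 1) * ((p : ℝ) * (1 - x))) * (x ^ (a' + 1) * ((q : ℝ) * (1 - x))) := by
        apply mul_le_mul c1 c2 (mul_nonneg hxa0 hxq)
        exact mul_nonneg hxa0 (mul_nonneg (Nat.cast_nonneg p) h1x)
    _ = ((p : ℝ) * q) * ((x ^ a' * x) ^ 2 * (1 - x) ^ 2) := by rw [hxa]; ring
    _ ≤ (((a' : ℝ) + 1) * ((a' : ℝ) + 1)) * ((x ^ a' * x) ^ 2 * (1 - x) ^ 2) := by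
        apply mul_le_mul_of_nonneg_right hpq'
        positivity
    _ = ((((a' : ℝ) + 1) * x ^ a' * (1 - x)) ^ 2) * x ^ 2 := by ring
    _ ≤ ((((a' : ℝ) + 1) * x ^ a' * (1 - x)) ^ 2) * 1 := by
        apply mul_le_mul_of_nonneg_left _ (sq_nonneg _)
        nlinarith
    _ = (((a' : ℝ) + 1) * x ^ a' * (1 - x)) ^ 2 := mul_one _
    _ ≤ (1 - x ^ (a' + 1)) ^ 2 := by
        apply pow_le_pow_left₀ _ hgeom 2
        exact mul_nonneg (mul_nonneg (by positivity) ht0) h1x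

/-- Log-concavity of binomial coefficients (the instance we need). -/
lemma stmt19_logconcave (N s : ℕ) (hN : s + 2 ≤ N) :
    Nat.choose N s * Nat.choose N (s + 2) ≤ Nat.choose N (s + 1) * Nat.choose N (s + 1) := by
  have E1 : Nat.choose N (s + 2) * (s + 2) = Nat.choose N (s + 1) * (N - (s + 1)) :=
    Nat.choose_succ_right_eq N (s + 1)
  have E2 : Nat.choose N (s + 1) * (s + 1) = Nat.choose N s * (N - s) :=
    Nat.choose_succ_right_eq N s
  obtain ⟨k, rfl⟩ : ∃ k, N = s + 2 + k := ⟨N - (s + 2), by omega⟩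
  have e1 : s + 2 + k - (s + 1) = k + 1 := by omega
  have e2 : s + 2 + k - s = k + 2 := by omega
  rw [e1] at E1
  rw [e2] at E2
  set A := Nat.choose (s + 2 + k) s
  set B := Nat.choose (s + 2 + k) (s + 1)
  set C := Nat.choose (s + 2 + k) (s + 2)
  apply Nat.le_of_mul_le_mul_right _ (show 0 < (s + 2) * (k + 2) by positivity)
  calc A * C * ((s + 2) * (k + 2))
      = (A * (k + 2)) * (C * (s + 2)) := by ring
    _ = (A * (k + 2)) * (B * (k + 1)) := by rw [E1]
    _ = (B * (s + 1)) * (B * (k + 1)) := by rw [← E2]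
    _ = B * B * ((s + 1) * (k + 1)) := by ring
    _ ≤ B * B * ((s + 2) * (k + 2)) := Nat.mul_le_mul_left _ (by nlinarith)

/-- The function
`g(x) = 1 + x^{C(m+k+1,m-1)+C(m+k,m-1)} + x^{C(m+k+1,m)+C(m+k,m-1)} - 2x^{C(m+k,m-1)} - x^{C(m+k+2,m)}`
satisfies `g(1) = 0` and `g(x) ≥ 0` for all `x ∈ [0,1]`. -/
theorem stmt19 (m k : ℕ) (hm : 1 ≤ m) (g : ℝ → ℝ)
    (hg : ∀ x : ℝ, g x =
      1 + x ^ (Nat.choose (m + k + 1) (m - 1) + Nat.choose (m + k) (m - 1))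
        + x ^ (Nat.choose (m + k + 1) m + Nat.choose (m + k) (m - 1))
        - 2 * x ^ (Nat.choose (m + k) (m - 1))
        - x ^ (Nat.choose (m + k + 2) m)) :
    g 1 = 0 ∧ ∀ x : ℝ, 0 ≤ x → x ≤ 1 → 0 ≤ g x := by
  obtain ⟨r, rfl⟩ : ∃ r, m = r + 1 := ⟨m - 1, (Nat.succ_pred_eq_of_pos hm).symm⟩
  simp only [Nat.add_sub_cancel] at hg
  have hrN : r ≤ r + 1 + k := by omega
  have ha1 : 1 ≤ Nat.choose (r + 1 + k) r := Nat.choose_pos hrN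
  -- the three coefficients
  have hc : Nat.choose (r + 1 + k + 1) (r + 1)
      = Nat.choose (r + 1 + k) r + Nat.choose (r + 1 + k) (r + 1) :=
    Nat.choose_succ_succ (r + 1 + k) r
  have hpb : ∃ p, Nat.choose (r + 1 + k + 1) r = Nat.choose (r + 1 + k) r + p ∧
      p * Nat.choose (r + 1 + k) (r + 1) ≤
        Nat.choose (r + 1 + k) r * Nat.choose (r + 1 + k) r := by
    rcases Nat.eq_zero_or_pos r with hr0 | hr1
    · subst hr0
      exact ⟨0, by simp, by simp⟩
    · obtain ⟨s, rfl⟩ : ∃ s, r = s + 1 := ⟨r - 1, (Nat.succ_pred_eq_of_pos hr1).symm⟩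
      refine ⟨Nat.choose (s + 1 + 1 + k) s, ?_, ?_⟩
      · rw [Nat.choose_succ_succ, Nat.add_comm]
      · have h2 : s + 2 ≤ s + 1 + 1 + k := by omega
        have := stmt19_logconcave (s + 1 + 1 + k) s h2
        convert this using 3 <;> omega
  obtain ⟨p, hbp, hpq⟩ := hpb
  set q := Nat.choose (r + 1 + k) (r + 1) with hq'
  set a := Nat.choose (r + 1 + k) r with ha'
  have pascal : Nat.choose (r + 1 + k + 2) (r + 1) = (a + p) + (a + q) := by
    have h2 : r + 1 + k + 2 = (r + 1 + k + 1) + 1 := rfl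
    rw [h2, Nat.choose_succ_succ, hbp, hc]
  have key : ∀ x : ℝ, g x =
      (1 - x ^ a) ^ 2 - (x ^ a - x ^ (a + p)) * (x ^ a - x ^ (a + q)) := by
    intro x
    rw [hg, hbp, hc, pascal, pow_add, pow_add, pow_add, pow_add, pow_add]
    ring
  constructor
  · rw [key]; ring
  · intro x hx0 hx1
    rw [key]
    have := stmt19_aux a p q ha1 hpq x hx0 hx1
    linarith
end
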